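/- If α ∈ 𝓕_m(ℝ²) is a critical point of 𝓗_{ℝ²} (∇𝓗_{ℝ²}(α) = 0), then the kernel of the Hessian contains the subspace sum: ker ∇²𝓗_{ℝ²}(α) ⊇ {(a,…,a) ∈ ℝ^{2m} : a ∈ ℝ²} + ℝ·J_mα + ℝ·α. -/

import Mathlib

/-! Writing `J` for the rotation `Jrot`, the similarities `x ↦ b + (p + qJ)x` of the plane
multiply all mutual distances by `√(p² + q²)`, so they change the logarithmic Hamiltonian
`planeHam Γ` only by an additive constant and therefore map its critical points to critical
points. The line `ε ↦ α + ε (a + sJα + tα)` consists of the images `εa + (1 + εt + εsJ)α` of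
the critical point `α`, so the gradient vanishes identically along it; differentiating at
`ε = 0` shows that the Hessian kills `a + sJα + tα`. -/

noncomputable section

open Real

/-- The plane `ℝ²` with its Euclidean structure. -/
abbrev R2 : Type := EuclideanSpace ℝ (Fin 2)

/-- The standard symplectic matrix `J` (rotation by `-π/2`): `J(x₁,x₂) = (x₂,-x₁)`. -/
def Jrot (x : R2) : R2 := (WithLp.equiv 2 (Fin 2 → ℝ)).symm ![x 1, -(x 0)]

/-- The rotation `e^{θJ}` of the plane. -/
def rotate (θ : ℝ) (x : R2) : R2 :=
  (WithLp.equiv 2 (Fin 2 → ℝ)).symm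
    ![Real.cos θ * x 0 + Real.sin θ * x 1, -Real.sin θ * x 0 + Real.cos θ * x 1]

/-- The generalized Green's function `G(x,y) = -(1/2π) log|x-y| - g(x,y)`. -/
def Gf (g : R2 → R2 → ℝ) (x y : R2) : ℝ := -(1 / (2 * π)) * Real.log ‖x - y‖ - g x y

/-- `z` is a configuration of pairwise distinct points of `Ω`. -/
def Conf {ι : Type*} (Ω : Set R2) (z : ι → R2) : Prop :=
  (∀ i, z i ∈ Ω) ∧ ∀ i i', i ≠ i' → z i ≠ z i'

/-- The `m`-vortex Hamiltonian `𝓗`. -/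
def mHam {m : ℕ} (g : R2 → R2 → ℝ) (Γ : Fin m → ℝ) (a : Fin m → R2) : ℝ :=
  (∑ k, ∑ k', if k ≠ k' then Γ k * Γ k' * Gf g (a k) (a k') else 0)
    - ∑ k, Γ k ^ 2 * g (a k) (a k)

/-- Partial gradient `∇_{zᵢ} f(z) ∈ ℝ²` of a function of several planar variables. -/
def pgrad {ι : Type*} [DecidableEq ι] (f : (ι → R2) → ℝ) (z : ι → R2) (i : ι) : R2 :=
  gradient (fun p => f (Function.update z i p)) (z i)

/-- `i`-th block of the Hessian of `f` at `z` applied to `w`, `(∇²f(z)w)ᵢ ∈ ℝ²`. -/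
def hessVec {ι : Type*} [Fintype ι] [DecidableEq ι] (f : (ι → R2) → ℝ) (z w : ι → R2)
    (i : ι) : R2 :=
  gradient (fun p => fderiv ℝ f (Function.update z i p) w) (z i)

/-- Kernel of the Hessian `∇²f(z)` viewed as a map into the dual space. -/
def hessKer {ι : Type*} [Fintype ι] (f : (ι → R2) → ℝ) (z : ι → R2) :
    Submodule ℝ (ι → R2) :=
  LinearMap.ker (fderiv ℝ (fderiv ℝ f) z : (ι → R2) →ₗ[ℝ] (ι → R2) →L[ℝ] ℝ)

/-- `z : ℝ → (ι → ℝ²)` solves the vortex system `Γᵢ żᵢ = J ∇_{zᵢ} Ham(z)` on `I`. -/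
def IsVortexSol {ι : Type*} [Fintype ι] [DecidableEq ι] (Γv : ι → ℝ)
    (Ham : (ι → R2) → ℝ) (I : Set ℝ) (z : ℝ → ι → R2) : Prop :=
  ∀ t ∈ I, ∀ i, HasDerivAt (fun s => Γv i • z s i) (Jrot (pgrad Ham (z t) i)) t

/-- The whole-plane `n`-vortex Hamiltonian. -/
def planeHam {n : ℕ} (Γk : Fin n → ℝ) (z : Fin n → R2) : ℝ :=
  -(1 / (2 * π)) * ∑ j, ∑ j', if j ≠ j' then Γk j * Γk j' * Real.log ‖z j - z j'‖ else 0

/-- `Z` is a relative equilibrium `Z(t) = e^{±J t/ordσ} z⁰` of the whole-plane system. -/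
def IsRelEq {n : ℕ} (Γk : Fin n → ℝ) (ordσ : ℕ) (Z : ℝ → Fin n → R2) : Prop :=
  (∃ ω : ℝ, (ω = 1 ∨ ω = -1) ∧ ∃ z0 : Fin n → R2,
      (∀ j j', j ≠ j' → z0 j ≠ z0 j') ∧ ∀ t j, Z t j = rotate (ω * t / (ordσ : ℝ)) (z0 j)) ∧
  IsVortexSol Γk (planeHam Γk) Set.univ Z

/-- `w` solves the linearization `Γⱼẇⱼ = J(∇²H_{ℝ²}(Z(t))w)ⱼ` and is `σ`-symmetric. -/
def IsLinSol {n : ℕ} (Γk : Fin n → ℝ) (σ : Equiv.Perm (Fin n)) (Z : ℝ → Fin n → R2)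
    (w : ℝ → Fin n → R2) : Prop :=
  (∀ t j, HasDerivAt (fun s => Γk j • w s j)
      (Jrot (hessVec (planeHam Γk) (Z t) (w t) j)) t) ∧
  ∀ t j, w (t + 2 * π) (σ⁻¹ j) = w t j

/-- `σ`-nondegeneracy of a relative equilibrium: `σ*Z(·+2π) = Z` and the space of
`σ`-symmetric solutions of the linearized equation is exactly 3-dimensional. -/
def SigmaNondeg {n : ℕ} (Γk : Fin n → ℝ) (σ : Equiv.Perm (Fin n)) (Z : ℝ → Fin n → R2) :
    Prop :=
  (∀ t j, Z (t + 2 * π) (σ⁻¹ j) = Z t j) ∧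
  ∃ W : Fin 3 → ℝ → Fin n → R2,
    LinearIndependent ℝ W ∧ (∀ p, IsLinSol Γk σ Z (W p)) ∧
    ∀ w, IsLinSol Γk σ Z w → w ∈ Submodule.span ℝ (Set.range W)

/-- The `N`-vortex Hamiltonian `H` on clustered configurations. -/
def NHam {m : ℕ} {Nk : Fin m → ℕ} (g : R2 → R2 → ℝ)
    (Γc : (k : Fin m) → Fin (Nk k) → ℝ) (z : ((k : Fin m) × Fin (Nk k)) → R2) : ℝ :=
  (∑ i, ∑ i', if i ≠ i' then Γc i.1 i.2 * Γc i'.1 i'.2 * Gf g (z i) (z i') else 0)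
    - ∑ i, Γc i.1 i.2 ^ 2 * g (z i) (z i)

/-- Square of the `H¹_T` distance of two (`C¹`, `T`-periodic) curves. -/
def H1distSq {ι : Type*} [Fintype ι] (T : ℝ) (u v : ℝ → ι → R2) : ℝ :=
  ∫ t in (0:ℝ)..T,
    ((∑ i, ‖u t i - v t i‖ ^ 2) +
      ∑ i, ‖deriv (fun s => u s i) t - deriv (fun s => v s i) t‖ ^ 2)

/-- The function `F` appearing in the rescaled Hamiltonian. -/
def Ffun {m : ℕ} {Nk : Fin m → ℕ} (g : R2 → R2 → ℝ)
    (Γc : (k : Fin m) → Fin (Nk k) → ℝ) (α : Fin m → R2)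
    (z : ((k : Fin m) × Fin (Nk k)) → R2) : ℝ :=
  (∑ i, ∑ i', if i.1 ≠ i'.1 then
      Γc i.1 i.2 * Γc i'.1 i'.2 * Gf g (z i + α i.1) (z i' + α i'.1) else 0)
    - ∑ k, ∑ j, ∑ j', Γc k j * Γc k j' * g (z ⟨k, j⟩ + α k) (z ⟨k, j'⟩ + α k)

/-- The decoupled limit Hamiltonian `H₀(u) = Σₖ Hᵏ_{ℝ²}(uᵏ)`. -/
def H0 {m : ℕ} {Nk : Fin m → ℕ} (Γc : (k : Fin m) → Fin (Nk k) → ℝ)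
    (u : ((k : Fin m) × Fin (Nk k)) → R2) : ℝ :=
  ∑ k, planeHam (Γc k) (fun j => u ⟨k, j⟩)

/-- The rescaled Hamiltonian `H_r(u) = H₀(u) + F(ru) - 𝓗(α)`. -/
def Hr {m : ℕ} {Nk : Fin m → ℕ} (g : R2 → R2 → ℝ) (Γ : Fin m → ℝ)
    (Γc : (k : Fin m) → Fin (Nk k) → ℝ) (α : Fin m → R2) (r : ℝ)
    (u : ((k : Fin m) × Fin (Nk k)) → R2) : ℝ :=
  H0 Γc u + Ffun g Γc α (r • u) - mHam g Γ α

open Filter Topology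

section Calculus

variable {𝕜 E F : Type*} [NontriviallyNormedField 𝕜]
  [NormedAddCommGroup E] [NormedSpace 𝕜 E] [NormedAddCommGroup F] [NormedSpace 𝕜 F]

theorem fderiv_apply_eq_zero_of_eventually_const_on_line {g : E → F} {x v : E} {y : F}
    (hg : DifferentiableAt 𝕜 g x) (hconst : ∀ᶠ ε in 𝓝 (0 : 𝕜), g (x + ε • v) = y) :
    fderiv 𝕜 g x v = 0 := by
  rw [← hg.lineDeriv_eq_fderiv, lineDeriv, Filter.EventuallyEq.deriv_eq hconst, deriv_const]

theorem fderiv_eq_zero_of_comp_affine_eventuallyEq {f : E → F} {S : E →L[𝕜] E}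
    (hS : Function.Surjective S) (c : E) {x : E} {C : F}
    (hf : DifferentiableAt 𝕜 f (c + S x))
    (hinv : (fun z => f (c + S z)) =ᶠ[𝓝 x] fun z => f z + C) (h0 : fderiv 𝕜 f x = 0) :
    fderiv 𝕜 f (c + S x) = 0 := by
  have hcomp : (fderiv 𝕜 f (c + S x)).comp S = 0 := by
    have hchain := (hf.hasFDerivAt.comp x (S.hasFDerivAt.const_add c)).fderiv
    rw [Function.comp_def, hinv.fderiv_eq, fderiv_add_const, h0] at hchain
    exact hchain.symm
  ext y
  obtain ⟨w, rfl⟩ := hS y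
  exact congr($hcomp w)

end Calculus

theorem fderiv_eq_zero_of_pgrad_eq_zero {ι : Type*} [Fintype ι] [DecidableEq ι]
    {f : (ι → R2) → ℝ} {z : ι → R2} (hf : DifferentiableAt ℝ f z)
    (h : ∀ i, pgrad f z i = 0) : fderiv ℝ f z = 0 := by
  have hpartial : ∀ i, (fderiv ℝ f z).comp (.single ℝ (fun _ => R2) i) = 0 := by
    intro i
    have hf' : HasFDerivAt f (fderiv ℝ f z) (Function.update z i (z i)) := by
      rw [Function.update_eq_self]
      exact hf.hasFDerivAt
    have hchain := (hf'.comp (z i) (hasFDerivAt_update z (z i))).fderiv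
    have hgrad := h i
    rw [pgrad, gradient, LinearIsometryEquiv.map_eq_zero_iff] at hgrad
    have hsingle : ContinuousLinearMap.pi (Pi.single i (.id ℝ R2)) =
        ContinuousLinearMap.single ℝ (fun _ => R2) i := by
      refine ContinuousLinearMap.ext fun y => funext fun j => ?_
      rcases eq_or_ne j i with rfl | hji <;> simp [*]
    rw [Function.comp_def, hgrad, hsingle] at hchain
    exact hchain.symm
  ext w
  rw [← ContinuousLinearMap.sum_comp_single ℝ (fun _ => R2) (fderiv ℝ f z) w]
  simp [hpartial]

section PlaneSimilarity

@[simp] theorem Jrot_apply_zero (x : R2) : Jrot x 0 = x 1 := rfl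

@[simp] theorem Jrot_apply_one (x : R2) : Jrot x 1 = -x 0 := rfl

theorem R2.ext {x y : R2} (h0 : x 0 = y 0) (h1 : x 1 = y 1) : x = y := by
  ext i
  fin_cases i <;> assumption

def JrotL : R2 →L[ℝ] R2 :=
  LinearMap.toContinuousLinearMap
    { toFun := Jrot
      map_add' := fun _ _ => R2.ext rfl (neg_add _ _)
      map_smul' := fun _ _ => R2.ext rfl (mul_neg _ _).symm }

@[simp] theorem JrotL_apply (x : R2) : JrotL x = Jrot x := rfl

def rotDil (p q : ℝ) : R2 →L[ℝ] R2 := p • ContinuousLinearMap.id ℝ R2 + q • JrotL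

theorem rotDil_apply (p q : ℝ) (x : R2) : rotDil p q x = p • x + q • Jrot x := rfl

theorem norm_rotDil (p q : ℝ) (x : R2) : ‖rotDil p q x‖ = √(p ^ 2 + q ^ 2) * ‖x‖ := by
  rw [EuclideanSpace.norm_eq, EuclideanSpace.norm_eq, ← Real.sqrt_mul (by positivity)]
  congr 1
  simp only [rotDil_apply, PiLp.add_apply, PiLp.smul_apply, smul_eq_mul, norm_eq_abs, sq_abs,
    Fin.sum_univ_two, Jrot_apply_zero, Jrot_apply_one]
  ring

theorem rotDil_comp_rotDil_inv {p q : ℝ} (hpq : p ^ 2 + q ^ 2 ≠ 0) (y : R2) :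
    rotDil p q (rotDil (p / (p ^ 2 + q ^ 2)) (-q / (p ^ 2 + q ^ 2)) y) = y := by
  apply R2.ext <;>
  · simp only [rotDil_apply, PiLp.add_apply, PiLp.smul_apply, smul_eq_mul, Jrot_apply_zero,
      Jrot_apply_one, smul_add]
    field_simp
    ring

end PlaneSimilarity

section PlaneHamiltonian

variable {m : ℕ}

theorem contDiffAt_planeHam (Γ : Fin m → ℝ) {z : Fin m → R2}
    (hz : ∀ j j', j ≠ j' → z j ≠ z j') : ContDiffAt ℝ 2 (planeHam Γ) z := by
  refine contDiffAt_const.mul (ContDiffAt.sum fun j _ => ContDiffAt.sum fun j' _ => ?_)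
  by_cases hjj : j = j'
  · simp only [hjj, ne_eq, not_true_eq_false, if_false]
    exact contDiffAt_const
  · simp only [ne_eq, hjj, not_false_eq_true, if_true]
    have hne : z j - z j' ≠ 0 := sub_ne_zero.2 (hz j j' hjj)
    have hdiff : ContDiffAt ℝ 2 (fun w : Fin m → R2 => w j - w j') z := by fun_prop
    exact contDiffAt_const.mul ((hdiff.norm ℝ hne).log (norm_ne_zero_iff.2 hne))

theorem eventually_pairwise_ne {z : Fin m → R2} (hz : ∀ j j', j ≠ j' → z j ≠ z j') :
    ∀ᶠ w in 𝓝 z, ∀ j j', j ≠ j' → w j ≠ w j' :=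
  eventually_all.2 fun j => eventually_all.2 fun j' => by
    by_cases hjj : j = j'
    · simp [hjj]
    · exact ((isOpen_ne_fun (continuous_apply j) (continuous_apply j')).eventually_mem
        (hz j j' hjj)).mono fun _ hw _ => hw

theorem planeHam_comp_of_norm_sub {T : R2 → R2} {r : ℝ} (hr : r ≠ 0)
    (hT : ∀ x y, ‖T x - T y‖ = r * ‖x - y‖) (Γ : Fin m → ℝ) {z : Fin m → R2}
    (hz : ∀ j j', j ≠ j' → z j ≠ z j') :
    planeHam Γ (fun k => T (z k)) = planeHam Γ z
      - 1 / (2 * π) * Real.log r * ∑ j, ∑ j', if j ≠ j' then Γ j * Γ j' else 0 := by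
  have hterm : ∀ j j', (if j ≠ j' then Γ j * Γ j' * Real.log ‖T (z j) - T (z j')‖ else 0) =
      (if j ≠ j' then Γ j * Γ j' * Real.log ‖z j - z j'‖ else 0)
        + Real.log r * (if j ≠ j' then Γ j * Γ j' else 0) := by
    intro j j'
    by_cases hjj : j = j'
    · simp [hjj]
    · rw [if_pos hjj, if_pos hjj, if_pos hjj, hT,
        Real.log_mul hr (norm_ne_zero_iff.2 (sub_ne_zero.2 (hz j j' hjj)))]
      ring
  simp only [planeHam, hterm, Finset.sum_add_distrib, ← Finset.mul_sum]
  ring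

theorem fderiv_planeHam_rotDil_eq_zero (Γ : Fin m → ℝ) {α : Fin m → R2}
    (hα : ∀ j j', j ≠ j' → α j ≠ α j') (h0 : fderiv ℝ (planeHam Γ) α = 0) (b : R2)
    {p q : ℝ} (hpq : p ^ 2 + q ^ 2 ≠ 0) :
    fderiv ℝ (planeHam Γ) (fun k => b + rotDil p q (α k)) = 0 := by
  have hS : Function.Surjective (ContinuousLinearMap.piMap fun _ : Fin m => rotDil p q) :=
    fun y => ⟨fun k => rotDil (p / (p ^ 2 + q ^ 2)) (-q / (p ^ 2 + q ^ 2)) (y k),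
      funext fun k => rotDil_comp_rotDil_inv hpq (y k)⟩
  have hr : √(p ^ 2 + q ^ 2) ≠ 0 :=
    (Real.sqrt_pos.2 (lt_of_le_of_ne (by positivity) hpq.symm)).ne'
  have hT : ∀ x y,
      ‖(b + rotDil p q x) - (b + rotDil p q y)‖ = √(p ^ 2 + q ^ 2) * ‖x - y‖ := by
    intro x y
    rw [add_sub_add_left_eq_sub, ← map_sub, norm_rotDil]
  have himage : ∀ j j', j ≠ j' → b + rotDil p q (α j) ≠ b + rotDil p q (α j') := by
    intro j j' hjj heq
    have hdist := hT (α j) (α j')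
    rw [heq, sub_self, norm_zero, eq_comm, mul_eq_zero, norm_eq_zero, sub_eq_zero] at hdist
    exact hdist.elim hr (hα j j' hjj)
  exact fderiv_eq_zero_of_comp_affine_eventuallyEq hS (fun _ => b)
    ((contDiffAt_planeHam Γ himage).differentiableAt two_ne_zero)
    ((eventually_pairwise_ne hα).mono fun z hz => planeHam_comp_of_norm_sub hr hT Γ hz) h0

end PlaneHamiltonian

theorem statement14_general
    (m : ℕ) (Γ : Fin m → ℝ)
    (α : Fin m → R2) (hα : ∀ k k', k ≠ k' → α k ≠ α k')
    (hcrit : ∀ k, pgrad (planeHam Γ) α k = 0) :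
    ∀ (a : R2) (s t : ℝ),
      (fun k => a + s • Jrot (α k) + t • α k) ∈ hessKer (planeHam Γ) α := by
  intro a s t
  have hH := contDiffAt_planeHam Γ hα
  have h0 := fderiv_eq_zero_of_pgrad_eq_zero (hH.differentiableAt two_ne_zero) hcrit
  have hline : ∀ ε : ℝ, α + ε • (fun k => a + s • Jrot (α k) + t • α k) =
      fun k => ε • a + rotDil (1 + ε * t) (ε * s) (α k) := by
    intro ε
    funext k
    simp only [Pi.add_apply, Pi.smul_apply, rotDil_apply]
    module
  have hnear : ∀ᶠ ε in 𝓝 (0 : ℝ), (1 + ε * t) ^ 2 + (ε * s) ^ 2 ≠ 0 := by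
    have hcont : Continuous fun ε : ℝ => 1 + ε * t := by fun_prop
    filter_upwards [hcont.continuousAt.eventually_ne (y := 0) (by simp)] with ε hε
    exact (add_pos_of_pos_of_nonneg (sq_pos_of_ne_zero hε) (sq_nonneg _)).ne'
  rw [hessKer, LinearMap.mem_ker]
  refine fderiv_apply_eq_zero_of_eventually_const_on_line (y := 0) ?_ ?_
  · exact (hH.fderiv_right (m := 1) le_rfl).differentiableAt one_ne_zero
  · filter_upwards [hnear] with ε hε
    rw [hline]
    exact fderiv_planeHam_rotDil_eq_zero Γ hα h0 (ε • a) hε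

/-- the kernel of `∇²𝓗_{ℝ²}(α)` contains translations, the rotation
direction `J_mα` and the scaling direction `α`. -/
theorem statement14
    (m : ℕ) (Γ : Fin m → ℝ) (hΓ : ∀ k, Γ k ≠ 0)
    (α : Fin m → R2) (hα : ∀ k k', k ≠ k' → α k ≠ α k')
    (hcrit : ∀ k, pgrad (planeHam Γ) α k = 0) :
    ∀ (a : R2) (s t : ℝ),
      (fun k => a + s • Jrot (α k) + t • α k) ∈ hessKer (planeHam Γ) α :=
  statement14_general m Γ α hα hcrit
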